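/- arXiv:1811.06891 — 4 statements merged into one kernel-verified Lean document; each statement's English description precedes it below -/
import Mathlib

section
/- For all integers m ≥ 0 and n ≥ 1, one has ∑_{k=0}^{n} (-1)^k (C(m+k, m) + C(m+k-1, m)) · C(m+2n, n-k) = 0, where C(a,b) denotes the binomial coefficient with the convention C(a,b) = 0 whenever b < 0 or b > a (in particular C(m-1, m) = 0). -/
/-- Binomial coefficient `C a b` for integers, with the convention that
`C a b = 0` whenever `b < 0` or `b > a`. -/
def intChoose (a b : ℤ) : ℤ :=
  if 0 ≤ b ∧ b ≤ a then (a.toNat.choose b.toNat : ℤ) else 0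

/-!
Multiplying the summand by `n` turns it into a difference `H k - H (k + 1)` with
`H k = (-1)^k (m + n + k) C(m+k-1, m) C(m+2n, n-k)`; this follows from the two absorption
identities `a C(a-1, b) = (a - b) C(a, b)` and `b C(a, b) = (a - b + 1) C(a, b-1)`.
The sum therefore telescopes to `H 0 - H (n + 1) = 0`, and `n ≠ 0` can be cancelled.
-/

theorem intChoose_natCast (a b : ℕ) : intChoose a b = a.choose b := by
  unfold intChoose
  split_ifs with h
  · simp
  · rw [Nat.choose_eq_zero_of_lt (by omega)]
    simp

theorem intChoose_eq_zero_of_neg_or_lt (a b : ℤ) (h : b < 0 ∨ a < b) : intChoose a b = 0 := by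
  unfold intChoose
  rw [if_neg (by omega)]

theorem mul_intChoose_sub_one_left (a b : ℤ) :
    a * intChoose (a - 1) b = (a - b) * intChoose a b := by
  rcases lt_or_ge b 0 with hb | hb
  · simp [intChoose_eq_zero_of_neg_or_lt _ _ (Or.inl hb)]
  rcases lt_or_ge (a - 1) b with hab | hab
  · rw [intChoose_eq_zero_of_neg_or_lt _ _ (Or.inr hab)]
    rcases (show a ≤ b by omega).lt_or_eq with hab | rfl
    · simp [intChoose_eq_zero_of_neg_or_lt _ _ (Or.inr hab)]
    · ring
  lift b to ℕ using hb
  obtain ⟨c, rfl⟩ : ∃ c : ℕ, a = c + 1 := ⟨(a - 1).toNat, by omega⟩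
  rw [add_sub_cancel_right, ← Nat.cast_one, ← Nat.cast_add, intChoose_natCast, intChoose_natCast]
  have h := Nat.choose_mul_succ_eq c b
  zify [show b ≤ c + 1 by omega] at h
  push_cast
  linear_combination h

theorem mul_intChoose_eq_mul_intChoose_sub_one_right (a b : ℤ) :
    b * intChoose a b = (a - b + 1) * intChoose a (b - 1) := by
  rcases lt_or_ge (b - 1) 0 with hb | hb
  · rw [intChoose_eq_zero_of_neg_or_lt _ _ (Or.inl hb)]
    rcases (show b ≤ 0 by omega).lt_or_eq with hb | rfl
    · simp [intChoose_eq_zero_of_neg_or_lt _ _ (Or.inl hb)]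
    · ring
  rcases lt_or_ge a (b - 1) with hab | hab
  · simp [intChoose_eq_zero_of_neg_or_lt _ _ (Or.inr hab), intChoose_eq_zero_of_neg_or_lt a b (Or.inr (by omega))]
  rcases (show b ≤ a + 1 by omega).lt_or_eq with hab | rfl
  · lift a to ℕ using by omega
    obtain ⟨c, rfl⟩ : ∃ c : ℕ, b = c + 1 := ⟨(b - 1).toNat, by omega⟩
    rw [add_sub_cancel_right, ← Nat.cast_one, ← Nat.cast_add, intChoose_natCast,
      intChoose_natCast]
    have h := Nat.choose_succ_right_eq a c
    zify [show c ≤ a by omega] at h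
    push_cast
    linear_combination h
  · simp [intChoose_eq_zero_of_neg_or_lt a (a + 1) (Or.inr (by omega))]

def inverseSummand (m n k : ℕ) : ℤ :=
  (-1) ^ k * (intChoose ((m : ℤ) + k) m + intChoose ((m : ℤ) + k - 1) m) *
    intChoose ((m : ℤ) + 2 * n) ((n : ℤ) - k)

def inverseSummandAntidiff (m n k : ℕ) : ℤ :=
  (-1) ^ k * ((m : ℤ) + n + k) * intChoose ((m : ℤ) + k - 1) m *
    intChoose ((m : ℤ) + 2 * n) ((n : ℤ) - k)

theorem natCast_mul_inverseSummand (m n k : ℕ) :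
    n * inverseSummand m n k =
      inverseSummandAntidiff m n k - inverseSummandAntidiff m n (k + 1) := by
  have upper := mul_intChoose_sub_one_left ((m : ℤ) + k) m
  have lower := mul_intChoose_eq_mul_intChoose_sub_one_right ((m : ℤ) + 2 * n) ((n : ℤ) - k)
  simp only [inverseSummand, inverseSummandAntidiff, Nat.cast_succ, pow_succ,
    show (m : ℤ) + (k + 1) - 1 = m + k by ring, show (n : ℤ) - (k + 1) = n - k - 1 by ring]
  linear_combination (-1) ^ k * (-intChoose ((m : ℤ) + 2 * n) ((n : ℤ) - k)) * upper +
    (-1) ^ k * intChoose ((m : ℤ) + k) m * lower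

theorem inverseSummandAntidiff_zero (m n : ℕ) : inverseSummandAntidiff m n 0 = 0 := by
  simp [inverseSummandAntidiff, intChoose_eq_zero_of_neg_or_lt ((m : ℤ) - 1) m (Or.inr (by omega))]

theorem inverseSummandAntidiff_succ_self (m n : ℕ) :
    inverseSummandAntidiff m n (n + 1) = 0 := by
  rw [inverseSummandAntidiff, Nat.cast_succ, show (n : ℤ) - (n + 1) = -1 by ring,
    intChoose_eq_zero_of_neg_or_lt _ (-1) (Or.inl (by norm_num)), mul_zero]

theorem stmt0 (m n : ℕ) (hn : 1 ≤ n) :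
    ∑ k ∈ Finset.range (n + 1),
      (-1 : ℤ) ^ k *
        (intChoose ((m : ℤ) + k) m + intChoose ((m : ℤ) + k - 1) m) *
        intChoose ((m : ℤ) + 2 * n) ((n : ℤ) - k) = 0 := by
  have telescoped : (n : ℤ) * ∑ k ∈ Finset.range (n + 1), inverseSummand m n k = 0 := by
    rw [Finset.mul_sum, Finset.sum_congr rfl fun k _ => natCast_mul_inverseSummand m n k,
      Finset.sum_range_sub', inverseSummandAntidiff_zero, inverseSummandAntidiff_succ_self,
      sub_zero]
  exact (mul_eq_zero.mp telescoped).resolve_left (by omega)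
end

section
/- Let l, b, β be integers with l > b ≥ 0 and 0 ≤ β ≤ b, and define u_{l,b,β} = C(2l-2b, l-2β) + 2·∑_{k=1}^{l} (-1)^k C(2l-2b, l-k-2β), with the convention C(a,c) = 0 if c < 0 or c > a. Then u_{l,b,β} + u_{l,b,b-β} = 0. -/
/-- `u_{l,b,β} = C(2l-2b, l-2β) + 2·∑_{k=1}^{l} (-1)^k C(2l-2b, l-k-2β)`. -/
def uLBB (l b β : ℕ) : ℤ :=
  intChoose (2 * l - 2 * b) ((l : ℤ) - 2 * β) +
    2 * ∑ k ∈ Finset.Icc 1 l,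
      (-1 : ℤ) ^ k * intChoose (2 * l - 2 * b) ((l : ℤ) - k - 2 * β)

open Finset

lemma intChoose_symm (N : ℕ) (c : ℤ) :
    intChoose (N : ℤ) c = intChoose (N : ℤ) ((N : ℤ) - c) := by
  unfold intChoose
  by_cases h : 0 ≤ c ∧ c ≤ (N : ℤ)
  · rw [if_pos h, if_pos ⟨by omega, by omega⟩]
    have h1 : ((N : ℤ) - c).toNat = N - c.toNat := by omega
    have h2 : (N : ℤ).toNat = N := by omega
    have h3 : c.toNat ≤ N := by omega
    rw [h1, h2, Nat.choose_symm h3]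
  · rw [if_neg h, if_neg (by omega)]

lemma intChoose_eq_sum (N : ℕ) (c : ℤ) :
    intChoose (N : ℤ) c =
      ∑ j ∈ range (N + 1), (N.choose j : ℤ) * (if (j : ℤ) = c then 1 else 0) := by
  unfold intChoose
  by_cases h : 0 ≤ c ∧ c ≤ (N : ℤ)
  · rw [if_pos h]
    rw [Finset.sum_eq_single c.toNat]
    · simp [Int.toNat_of_nonneg h.1]
    · intro j hj hne
      have : (j : ℤ) ≠ c := by omega
      simp [this]
    · intro hmem
      exfalso; apply hmem; simp [Finset.mem_range]; omega
  · rw [if_neg h]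
    rw [Finset.sum_eq_zero]
    intro j hj
    simp only [Finset.mem_range] at hj
    have : (j : ℤ) ≠ c := by omega
    simp [this]

lemma neg_one_pow_congr' (p q : ℕ) (h : p % 2 = q % 2) : (-1 : ℤ) ^ p = (-1) ^ q := by
  rcases Nat.even_or_odd p with hp | hp
  · have hq : Even q := Nat.even_iff.mpr (by rw [← h]; exact Nat.even_iff.mp hp)
    rw [hp.neg_one_pow, hq.neg_one_pow]
  · have hq : Odd q := Nat.odd_iff.mpr (by rw [← h]; exact Nat.odd_iff.mp hp)
    rw [hp.neg_one_pow, hq.neg_one_pow]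

lemma W_eval (l N : ℕ) (m : ℤ) (j : ℕ) (hj : j ≤ N) (h1 : m ≤ l) (h2 : (N : ℤ) ≤ l + m) :
    (if (j : ℤ) = m then (1 : ℤ) else 0) +
      ∑ k ∈ Icc 1 l, (-1 : ℤ) ^ k *
        ((if (j : ℤ) = m - k then 1 else 0) + (if (j : ℤ) = m + k then 1 else 0)) =
    (-1 : ℤ) ^ (m.natAbs + j) := by
  by_cases hjm : (j : ℤ) = m
  · rw [if_pos hjm, Finset.sum_eq_zero, neg_one_pow_congr' (m.natAbs + j) 0 (by omega)]
    · simp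
    · intro k hk
      simp only [Finset.mem_Icc] at hk
      have e1 : (j : ℤ) ≠ m - k := by omega
      have e2 : (j : ℤ) ≠ m + k := by omega
      simp [e1, e2]
  · rw [if_neg hjm]
    set k0 : ℕ := (m - (j : ℤ)).natAbs with hk0
    rw [Finset.sum_eq_single k0]
    · have : ((if (j : ℤ) = m - k0 then (1:ℤ) else 0) + (if (j : ℤ) = m + k0 then 1 else 0)) = 1 := by
        rcases lt_or_gt_of_ne hjm with h | h
        · rw [if_pos (by omega), if_neg (by omega)]; ring
        · rw [if_neg (by omega), if_pos (by omega)]; ring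
      rw [this, mul_one, neg_one_pow_congr' k0 (m.natAbs + j) (by omega)]
      ring
    · intro k hk hne
      simp only [Finset.mem_Icc] at hk
      have e1 : (j : ℤ) ≠ m - k := by omega
      have e2 : (j : ℤ) ≠ m + k := by omega
      simp [e1, e2]
    · intro hmem
      exfalso; apply hmem
      simp only [Finset.mem_Icc]
      omega

lemma swap_collect (s t : Finset ℕ) (f g : ℕ → ℤ) (h : ℕ → ℕ → ℤ) :
    ∑ k ∈ t, g k * ∑ j ∈ s, f j * h j k = ∑ j ∈ s, f j * ∑ k ∈ t, g k * h j k := by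
  simp only [Finset.mul_sum]
  rw [Finset.sum_comm]
  exact Finset.sum_congr rfl fun j _ => Finset.sum_congr rfl fun k _ => by ring

theorem stmt3 (l b β : ℕ) (hlb : b < l) (hβ : β ≤ b) :
    uLBB l b β + uLBB l b (b - β) = 0 := by
  set N : ℕ := 2 * (l - b) with hN
  set m : ℤ := (l : ℤ) - 2 * β with hm
  have hcast : (2 * (l : ℤ) - 2 * (b : ℤ)) = (N : ℤ) := by
    rw [hN]; push_cast [Nat.cast_sub hlb.le]; ring
  have hbβ : ((b - β : ℕ) : ℤ) = (b : ℤ) - β := by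
    push_cast [Nat.cast_sub hβ]; ring
  unfold uLBB
  rw [hcast, hbβ]
  -- rewrite the (b - β) part via symmetry
  have hsym1 : intChoose (N : ℤ) ((l : ℤ) - 2 * ((b : ℤ) - β)) = intChoose (N : ℤ) m := by
    rw [intChoose_symm]
    congr 1
    rw [hm, hN]; push_cast [Nat.cast_sub hlb.le]; ring
  have hsym2 : ∀ k ∈ Icc 1 l,
      (-1 : ℤ) ^ k * intChoose (N : ℤ) ((l : ℤ) - k - 2 * ((b : ℤ) - β)) =
      (-1 : ℤ) ^ k * intChoose (N : ℤ) (m + k) := by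
    intro k hk
    rw [intChoose_symm]
    congr 2
    rw [hm, hN]; push_cast [Nat.cast_sub hlb.le]; ring
  rw [hsym1, Finset.sum_congr rfl hsym2]
  -- main identity
  have key : intChoose (N : ℤ) m +
      ∑ k ∈ Icc 1 l, (-1 : ℤ) ^ k * (intChoose (N : ℤ) (m - k) + intChoose (N : ℤ) (m + k)) =
      (-1 : ℤ) ^ m.natAbs * ∑ j ∈ range (N + 1), (-1) ^ j * (N.choose j : ℤ) := by
    have expand : ∀ c : ℤ, intChoose (N : ℤ) c =
        ∑ j ∈ range (N + 1), (N.choose j : ℤ) * (if (j : ℤ) = c then 1 else 0) :=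
      intChoose_eq_sum N
    calc intChoose (N : ℤ) m +
        ∑ k ∈ Icc 1 l, (-1 : ℤ) ^ k * (intChoose (N : ℤ) (m - k) + intChoose (N : ℤ) (m + k))
        = (∑ j ∈ range (N + 1), (N.choose j : ℤ) * (if (j : ℤ) = m then 1 else 0)) +
          ((∑ k ∈ Icc 1 l, (-1 : ℤ) ^ k *
              ∑ j ∈ range (N + 1), (N.choose j : ℤ) * (if (j : ℤ) = m - k then 1 else 0)) +
           (∑ k ∈ Icc 1 l, (-1 : ℤ) ^ k *
              ∑ j ∈ range (N + 1), (N.choose j : ℤ) * (if (j : ℤ) = m + k then 1 else 0))) := by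
          simp only [expand]
          congr 1
          rw [← Finset.sum_add_distrib]
          exact Finset.sum_congr rfl fun k _ => by ring
      _ = (∑ j ∈ range (N + 1), (N.choose j : ℤ) * (if (j : ℤ) = m then 1 else 0)) +
          ((∑ j ∈ range (N + 1), (N.choose j : ℤ) *
              ∑ k ∈ Icc 1 l, (-1 : ℤ) ^ k * (if (j : ℤ) = m - k then 1 else 0)) +
           (∑ j ∈ range (N + 1), (N.choose j : ℤ) *
              ∑ k ∈ Icc 1 l, (-1 : ℤ) ^ k * (if (j : ℤ) = m + k then 1 else 0))) := by
          rw [swap_collect (range (N+1)) (Icc 1 l) _ _ (fun j k => if (j : ℤ) = m - k then 1 else 0),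
              swap_collect (range (N+1)) (Icc 1 l) _ _ (fun j k => if (j : ℤ) = m + k then 1 else 0)]
      _ = ∑ j ∈ range (N + 1), (N.choose j : ℤ) *
            ((if (j : ℤ) = m then (1:ℤ) else 0) +
              ∑ k ∈ Icc 1 l, (-1 : ℤ) ^ k *
                ((if (j : ℤ) = m - k then 1 else 0) + (if (j : ℤ) = m + k then 1 else 0))) := by
          rw [← Finset.sum_add_distrib, ← Finset.sum_add_distrib]
          apply Finset.sum_congr rfl
          intro j _
          have : ∑ k ∈ Icc 1 l, (-1 : ℤ) ^ k *
                ((if (j : ℤ) = m - k then (1:ℤ) else 0) + (if (j : ℤ) = m + k then 1 else 0)) =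
              ∑ k ∈ Icc 1 l, ((-1 : ℤ) ^ k * (if (j : ℤ) = m - k then 1 else 0) +
                (-1 : ℤ) ^ k * (if (j : ℤ) = m + k then 1 else 0)) :=
            Finset.sum_congr rfl fun k _ => by ring
          rw [this, Finset.sum_add_distrib]
          ring
      _ = ∑ j ∈ range (N + 1), (N.choose j : ℤ) * ((-1 : ℤ) ^ (m.natAbs + j)) := by
          apply Finset.sum_congr rfl
          intro j hj
          simp only [Finset.mem_range] at hj
          rw [W_eval l N m j (by omega) (by rw [hm]; omega)
            (by rw [hm, hN]; push_cast [Nat.cast_sub hlb.le]; omega)]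
      _ = (-1 : ℤ) ^ m.natAbs * ∑ j ∈ range (N + 1), (-1) ^ j * (N.choose j : ℤ) := by
          rw [Finset.mul_sum]
          apply Finset.sum_congr rfl
          intro j _
          rw [pow_add]; ring
  have alt : ∑ j ∈ range (N + 1), (-1 : ℤ) ^ j * (N.choose j : ℤ) = 0 :=
    Int.alternating_sum_range_choose_of_ne (by omega)
  have split : ∑ k ∈ Icc 1 l, (-1 : ℤ) ^ k *
      (intChoose (N : ℤ) (m - k) + intChoose (N : ℤ) (m + k)) =
      (∑ k ∈ Icc 1 l, (-1 : ℤ) ^ k * intChoose (N : ℤ) (m - k)) +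
      (∑ k ∈ Icc 1 l, (-1 : ℤ) ^ k * intChoose (N : ℤ) (m + k)) := by
    rw [← Finset.sum_add_distrib]
    exact Finset.sum_congr rfl fun k _ => by ring
  rw [alt, mul_zero, split] at key
  have hms : ∑ k ∈ Icc 1 l, (-1 : ℤ) ^ k * intChoose (N : ℤ) ((l : ℤ) - k - 2 * (β:ℤ)) =
      ∑ k ∈ Icc 1 l, (-1 : ℤ) ^ k * intChoose (N : ℤ) (m - k) := by
    apply Finset.sum_congr rfl
    intro k _
    congr 1
    rw [hm]; ring
  rw [show ((l : ℤ) - 2 * β) = m from by rw [hm]]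
  rw [hms]
  linarith [key]
end

section
/- Let l ≥ 0 be an integer and define u_{l,l,β} = C(0, l-2β) + 2·∑_{k=1}^{l} (-1)^k C(0, l-k-2β) for 0 ≤ β ≤ l, where C(0,c) = 1 if c = 0 and 0 otherwise. Then ∑_{β=0}^{l} u_{l,l,β} · C(l, β) = (-2)^l. -/
/-- `u_{l,l,β} = C(0, l-2β) + 2·∑_{k=1}^{l} (-1)^k C(0, l-k-2β)`. -/
def uLLB (l β : ℕ) : ℤ :=
  intChoose 0 ((l : ℤ) - 2 * β) +
    2 * ∑ k ∈ Finset.Icc 1 l,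
      (-1 : ℤ) ^ k * intChoose 0 ((l : ℤ) - k - 2 * β)

/-! The coefficients satisfy `u_β + u_{l-β} = 2 (-1)^l` for every `β ≤ l` (at `2β = l` because
`l` is then even), so pairing `β` with `l - β` and using `C(l, β) = C(l, l-β)` turns twice the
sum into `2 (-1)^l ∑ C(l, β) = 2 (-2)^l`. -/

open Finset

lemma intChoose_zero_left (c : ℤ) : intChoose 0 c = if c = 0 then 1 else 0 := by
  unfold intChoose
  split_ifs <;> first | omega | simp_all

lemma neg_one_pow_sub_two_mul {l β : ℕ} (h : 2 * β ≤ l) : (-1 : ℤ) ^ (l - 2 * β) = (-1) ^ l := by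
  obtain ⟨d, rfl⟩ := Nat.exists_eq_add_of_le h
  simp [pow_add, pow_mul]

lemma uLLB_eq_ite (l β : ℕ) :
    uLLB l β = if l = 2 * β then 1 else if 2 * β < l then 2 * (-1) ^ l else 0 := by
  have hsum : ∑ k ∈ Icc 1 l, (-1 : ℤ) ^ k * intChoose 0 ((l : ℤ) - k - 2 * β) =
      if 2 * β < l then (-1) ^ l else 0 := by
    calc _ = ∑ k ∈ Icc 1 l, if l - 2 * β = k then (-1 : ℤ) ^ k else 0 := by
          refine sum_congr rfl fun k hk => ?_
          rw [mem_Icc] at hk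
          rw [intChoose_zero_left, mul_ite, mul_one, mul_zero]
          exact if_congr (by omega) rfl rfl
      _ = if 2 * β < l then (-1) ^ (l - 2 * β) else 0 := by
          rw [sum_ite_eq]
          exact if_congr (by rw [mem_Icc]; omega) rfl rfl
      _ = _ := by
          split_ifs with h
          · exact neg_one_pow_sub_two_mul h.le
          · rfl
  rw [uLLB, hsum, intChoose_zero_left]
  split_ifs <;> omega

lemma uLLB_add_uLLB_sub {l β : ℕ} (hβ : β ≤ l) : uLLB l β + uLLB l (l - β) = 2 * (-1) ^ l := by
  rw [uLLB_eq_ite, uLLB_eq_ite]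
  by_cases hmid : l = 2 * β
  · have hsub : l - β = β := by omega
    rw [hsub, hmid]
    simp [pow_mul]
  · split_ifs <;> omega

theorem stmt6 (l : ℕ) :
    ∑ β ∈ Finset.range (l + 1), uLLB l β * (l.choose β : ℤ) = (-2 : ℤ) ^ l := by
  set S := ∑ β ∈ range (l + 1), uLLB l β * (l.choose β : ℤ)
  have hreflect : ∑ β ∈ range (l + 1), uLLB l (l - β) * (l.choose β : ℤ) = S := by
    rw [← sum_range_reflect]
    refine sum_congr rfl fun β hβ => ?_
    rw [mem_range] at hβ
    rw [Nat.add_sub_cancel, Nat.sub_sub_self (by omega), Nat.choose_symm (by omega)]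
  have hdouble : 2 * S = 2 * (-2) ^ l :=
    calc 2 * S = ∑ β ∈ range (l + 1), (uLLB l β + uLLB l (l - β)) * (l.choose β : ℤ) := by
          simp only [add_mul, sum_add_distrib, hreflect]; ring
      _ = 2 * (-1) ^ l * ∑ β ∈ range (l + 1), (l.choose β : ℤ) := by
          rw [mul_sum]
          exact sum_congr rfl fun β hβ => by
            rw [uLLB_add_uLLB_sub (Nat.lt_succ_iff.mp (mem_range.mp hβ))]
      _ = 2 * (-2) ^ l := by
          rw [← Nat.cast_sum, Nat.sum_range_choose, neg_pow (2 : ℤ)]; push_cast; ring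
  linarith
end

section
/- Let l ≥ b ≥ 0 be integers and 0 ≤ β ≤ b, set m = 2l - 2b, and define u_{l,b,β} = C(m, l-2β) + 2·∑_{k=1}^{l} (-1)^k C(m, l-k-2β), with the convention C(a,c) = 0 if c < 0 or c > a. Then u_{l,b,β} + u_{l,b,b-β} = 2·(-1)^l · ∑_{p=0}^{m} (-1)^p C(m, p). -/
open Finset Int

lemma ic_neg (m : ℕ) (q : ℤ) (h : q < 0) : intChoose m q = 0 := by
  rw [intChoose, if_neg]; omega

lemma ic_gt (m : ℕ) (q : ℤ) (h : (m : ℤ) < q) : intChoose m q = 0 := by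
  rw [intChoose, if_neg]; omega

lemma ic_val (m : ℕ) (q : ℤ) (h0 : 0 ≤ q) (h1 : q ≤ m) :
    intChoose m q = (m.choose q.toNat : ℤ) := by
  rw [intChoose, if_pos ⟨h0, h1⟩, Int.toNat_natCast]

lemma ic_symm (m : ℕ) (q : ℤ) : intChoose m ((m : ℤ) - q) = intChoose m q := by
  rcases le_or_gt 0 q with h0 | h0
  · rcases le_or_gt q (m : ℤ) with h1 | h1
    · rw [ic_val m q h0 h1, ic_val m _ (by omega) (by omega)]
      have hq : q.toNat ≤ m := by omega
      have h2 : ((m : ℤ) - q).toNat = m - q.toNat := by omega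
      rw [h2, Nat.choose_symm hq]
    · rw [ic_gt m q h1, ic_neg m _ (by omega)]
  · rw [ic_neg m q h0, ic_gt m _ (by omega)]

lemma sum_reindex (m l : ℕ) (q : ℤ) (hq : q ≤ l) :
    ∑ k ∈ Icc 1 l, (-1 : ℤ) ^ k * intChoose m (q - k)
      = (q.negOnePow : ℤ) *
        ∑ p ∈ Icc (0 : ℤ) (q - 1), (p.negOnePow : ℤ) * intChoose m p := by
  have step1 : ∑ k ∈ Icc 1 l, (-1 : ℤ) ^ k * intChoose m (q - k)
      = ∑ p ∈ Icc (q - l) (q - 1), ((q - p).negOnePow : ℤ) * intChoose m p := by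
    refine Finset.sum_nbij' (fun k => q - (k : ℤ)) (fun p => (q - p).toNat) ?_ ?_ ?_ ?_ ?_
    · intro k hk; simp only [mem_Icc] at *; omega
    · intro p hp; simp only [mem_Icc] at *; omega
    · intro k hk; simp only [mem_Icc] at hk; omega
    · intro p hp; simp only [mem_Icc] at hp; omega
    · intro k hk
      have : q - (q - (k : ℤ)) = (k : ℤ) := by ring
      rw [this, Int.coe_negOnePow_natCast]
  have step2 : ∑ p ∈ Icc (0 : ℤ) (q - 1), ((q - p).negOnePow : ℤ) * intChoose m p
      = ∑ p ∈ Icc (q - l) (q - 1), ((q - p).negOnePow : ℤ) * intChoose m p := by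
    refine Finset.sum_subset (Finset.Icc_subset_Icc_left (by omega)) ?_
    intro p hp hp'
    simp only [mem_Icc] at hp hp'
    rw [ic_neg m p (by omega), mul_zero]
  rw [step1, ← step2, Finset.mul_sum]
  refine Finset.sum_congr rfl fun p _ => ?_
  rw [Int.negOnePow_sub q p]
  push_cast
  ring

lemma pair_sum (m : ℤ) (hm0 : 0 ≤ m) (g : ℤ → ℤ) (hsymm : ∀ p, g (m - p) = g p)
    (h0 : ∀ p, p < 0 → g p = 0) (h1 : ∀ p, m < p → g p = 0) (q : ℤ) :
    ∑ p ∈ Icc (0 : ℤ) (q - 1), g p + ∑ p ∈ Icc (0 : ℤ) (m - q - 1), g p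
      = ∑ p ∈ Icc (0 : ℤ) m, g p - g q := by
  have step : ∑ p ∈ Icc (0 : ℤ) (m - q - 1), g p = ∑ p ∈ Icc (q + 1) m, g p := by
    refine Finset.sum_nbij' (fun p => m - p) (fun p => m - p) ?_ ?_ ?_ ?_ ?_
    · intro p hp; simp only [mem_Icc] at *; omega
    · intro p hp; simp only [mem_Icc] at *; omega
    · intro p hp; omega
    · intro p hp; omega
    · intro p hp; exact (hsymm p).symm
  rw [step]
  rcases lt_or_ge q 0 with hq | hq
  · have e1 : Icc (0 : ℤ) (q - 1) = ∅ := Finset.Icc_eq_empty (by omega)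
    have e2 : ∑ p ∈ Icc (0 : ℤ) m, g p = ∑ p ∈ Icc (q + 1) m, g p := by
      refine Finset.sum_subset (Finset.Icc_subset_Icc_left (by omega)) ?_
      intro p hp hp'
      simp only [mem_Icc] at hp hp'
      exact h0 p (by omega)
    rw [e1, Finset.sum_empty, zero_add, ← e2, h0 q hq, sub_zero]
  rcases le_or_gt q m with hq2 | hq2
  · have e1 : Icc (0 : ℤ) m = Ioc (-1 : ℤ) m := by
      ext x; simp only [mem_Icc, mem_Ioc]; omega
    have e2 : Icc (0 : ℤ) (q - 1) = Ioc (-1 : ℤ) (q - 1) := by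
      ext x; simp only [mem_Icc, mem_Ioc]; omega
    have e3 : Icc (q + 1) m = Ioc q m := by
      ext x; simp only [mem_Icc, mem_Ioc]; omega
    have e4 : Ioc (q - 1) q = {q} := by
      ext x; simp only [mem_Ioc, mem_singleton]; omega
    have d1 : Disjoint (Ioc (-1 : ℤ) (q - 1)) (Ioc (q - 1) m) := by
      rw [Finset.disjoint_left]
      intro x hx hx'
      simp only [mem_Ioc] at hx hx'
      omega
    have d2 : Disjoint (Ioc (q - 1) q) (Ioc q m) := by
      rw [Finset.disjoint_left]
      intro x hx hx'
      simp only [mem_Ioc] at hx hx'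
      omega
    have c1 : ∑ p ∈ Ioc (-1 : ℤ) (q - 1), g p + ∑ p ∈ Ioc (q - 1) m, g p
        = ∑ p ∈ Ioc (-1 : ℤ) m, g p := by
      rw [← Finset.sum_union d1, Finset.Ioc_union_Ioc_eq_Ioc (by omega) (by omega)]
    have c2 : ∑ p ∈ Ioc (q - 1) q, g p + ∑ p ∈ Ioc q m, g p
        = ∑ p ∈ Ioc (q - 1) m, g p := by
      rw [← Finset.sum_union d2, Finset.Ioc_union_Ioc_eq_Ioc (by omega) (by omega)]
    have c3 : ∑ p ∈ Ioc (q - 1) q, g p = g q := by rw [e4, Finset.sum_singleton]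
    rw [e1, e2, e3]
    rw [c3] at c2
    linarith [c1, c2]
  · have e1 : Icc (q + 1) m = ∅ := Finset.Icc_eq_empty (by omega)
    have e2 : ∑ p ∈ Icc (0 : ℤ) m, g p = ∑ p ∈ Icc (0 : ℤ) (q - 1), g p := by
      refine Finset.sum_subset (Finset.Icc_subset_Icc_right (by omega)) ?_
      intro p hp hp'
      simp only [mem_Icc] at hp hp'
      exact h1 p (by omega)
    rw [e1, Finset.sum_empty, add_zero, e2, h1 q hq2, sub_zero]

lemma T_eq (m : ℕ) :
    ∑ p ∈ Icc (0 : ℤ) (m : ℤ), (p.negOnePow : ℤ) * intChoose m p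
      = ∑ p ∈ Finset.range (m + 1), (-1 : ℤ) ^ p * (m.choose p : ℤ) := by
  refine Finset.sum_nbij' (fun p => p.toNat) (fun p => (p : ℤ)) ?_ ?_ ?_ ?_ ?_
  · intro p hp; simp only [mem_Icc] at hp; simp only [Finset.mem_range]; omega
  · intro p hp; simp only [Finset.mem_range] at hp; simp only [mem_Icc]; omega
  · intro p hp; simp only [mem_Icc] at hp; omega
  · intro p hp; omega
  · intro p hp
    simp only [mem_Icc] at hp
    rw [ic_val m p hp.1 hp.2]
    congr 1
    have hpp : p = ((p.toNat : ℕ) : ℤ) := by omega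
    conv_lhs => rw [hpp]
    rw [Int.coe_negOnePow_natCast]

theorem stmt7 (l b β : ℕ) (hlb : b ≤ l) (hβ : β ≤ b) :
    uLBB l b β + uLBB l b (b - β) =
      2 * (-1 : ℤ) ^ l *
        ∑ p ∈ Finset.range (2 * (l - b) + 1),
          (-1 : ℤ) ^ p * ((2 * (l - b)).choose p : ℤ) := by
  set M : ℕ := 2 * (l - b) with hM
  have hcast : 2 * (l : ℤ) - 2 * (b : ℤ) = (M : ℤ) := by simp only [hM]; omega
  set q : ℤ := (l : ℤ) - 2 * β with hq
  set q' : ℤ := (l : ℤ) - 2 * ((b - β : ℕ) : ℤ) with hq'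
  have hq'' : q' = (M : ℤ) - q := by simp only [hq', hq, hM]; omega
  have h1 : uLBB l b β = intChoose M q + 2 * ∑ k ∈ Icc 1 l, (-1 : ℤ) ^ k * intChoose M (q - k) := by
    rw [uLBB, hcast]
    congr 1
    congr 1
    refine Finset.sum_congr rfl fun k _ => ?_
    congr 1
    congr 1
    simp only [hq]; ring
  have h2 : uLBB l b (b - β)
      = intChoose M q' + 2 * ∑ k ∈ Icc 1 l, (-1 : ℤ) ^ k * intChoose M (q' - k) := by
    rw [uLBB, hcast]
    congr 1
    congr 1
    refine Finset.sum_congr rfl fun k _ => ?_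
    congr 1
    congr 1
    simp only [hq']; ring
  have hql : q ≤ l := by simp only [hq]; omega
  have hq'l : q' ≤ l := by simp only [hq']; omega
  have hm : Even ((M : ℕ) : ℤ) := ⟨((l - b : ℕ) : ℤ), by simp only [hM]; omega⟩
  rw [h1, h2, sum_reindex M l q hql, sum_reindex M l q' hq'l, hq'']
  have hsymm : intChoose M ((M : ℤ) - q) = intChoose M q := ic_symm M q
  have hsign : (((M : ℤ) - q).negOnePow : ℤ) = (q.negOnePow : ℤ) := by
    rw [Int.negOnePow_sub, Int.negOnePow_even _ hm]; push_cast; ring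
  have hg1 : ∀ p : ℤ, ((((M : ℤ) - p).negOnePow : ℤ)) * intChoose M ((M : ℤ) - p)
      = (p.negOnePow : ℤ) * intChoose M p := by
    intro p
    rw [ic_symm, Int.negOnePow_sub, Int.negOnePow_even _ hm]
    push_cast
    ring
  have hg2 : ∀ p : ℤ, p < 0 → (p.negOnePow : ℤ) * intChoose M p = 0 := by
    intro p hp
    rw [ic_neg M p hp, mul_zero]
  have hg3 : ∀ p : ℤ, (M : ℤ) < p → (p.negOnePow : ℤ) * intChoose M p = 0 := by
    intro p hp
    rw [ic_gt M p hp, mul_zero]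
  have hpair := pair_sum (M : ℤ) (by positivity)
    (fun p => (p.negOnePow : ℤ) * intChoose M p) hg1 hg2 hg3 q
  have hsq : (q.negOnePow : ℤ) * (q.negOnePow : ℤ) = 1 := by
    rw [← Units.val_mul, Int.units_mul_self, Units.val_one]
  have hqsign : (q.negOnePow : ℤ) = (-1 : ℤ) ^ l := by
    simp only [hq]
    rw [Int.negOnePow_sub, Int.negOnePow_even (2 * (β : ℤ)) ⟨(β : ℤ), by ring⟩, mul_one,
      Int.coe_negOnePow_natCast]
  rw [← T_eq M, hsymm, hsign]
  rw [hqsign] at hpair hsq ⊢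
  linear_combination (2 : ℤ) * (-1 : ℤ) ^ l * hpair - 2 * intChoose M q * hsq
end
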